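/- Let n ≥ 2 and D_i = 2^{i-1} · i!. The map d_n : D_n → {0, 1, ..., 2^{n-1}·n! − 1} defined by d_n(π) = Σ_{i=1}^{n−1} inv_i(π) · D_{n−i} is a bijection. -/

import Mathlib

/-- A signed permutation `π` of `[n]`: `π(i) = ε i · σ(i)` with `σ` a permutation
of `[n]` and signs `ε i ∈ {±1}`.  Positions are encoded by `Fin n`
(position `i ∈ [n]` corresponds to `⟨i-1, _⟩ : Fin n`). -/
structure SignedPerm (n : ℕ) where
  σ : Equiv.Perm (Fin n)
  ε : Fin n → ℤ
  hε : ∀ i, ε i = 1 ∨ ε i = -1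

namespace SignedPerm

variable {n : ℕ}

/-- The signed value `π(i) = ε i · σ(i) ∈ {-n, …, -1, 1, …, n}` (1-based value). -/
def val (π : SignedPerm n) (i : Fin n) : ℤ :=
  π.ε i * ((π.σ i : ℕ) + 1)

/-- The standard basis vector `e i` of `ℝ^n`. -/
def e (i : Fin n) : Fin n → ℝ := Pi.single i 1

/-- The action of a signed permutation on `ℝ^n`, determined by
`π · e i = ε i · e (σ i)`. -/
def act (π : SignedPerm n) (v : Fin n → ℝ) : Fin n → ℝ :=
  fun j => (π.ε (π.σ.symm j) : ℝ) * v (π.σ.symm j)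

/-- The positive root system `Φₙ⁺ = {e k, e i + e j, e i - e j : k, i < j}` of `Bₙ`. -/
def PhiPos (n : ℕ) : Set (Fin n → ℝ) :=
  {v | (∃ k : Fin n, v = e k) ∨ ∃ i j : Fin n, i < j ∧ (v = e i + e j ∨ v = e i - e j)}

/-- The positive roots `Φₙ,ᵢ⁺ = {e i, e i + e j, e i - e j : i < j ≤ n}`. -/
def PhiPosI (n : ℕ) (i : Fin n) : Set (Fin n → ℝ) :=
  {v | v = e i ∨ ∃ j : Fin n, i < j ∧ (v = e i + e j ∨ v = e i - e j)}

/-- The `i`-inversion number `invᵢ π = #{v ∈ Φₙ,ᵢ⁺ : π · v ∈ -Φₙ⁺}`. -/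
noncomputable def invi (i : Fin n) (π : SignedPerm n) : ℕ :=
  Set.ncard {v | v ∈ PhiPosI n i ∧ -(π.act v) ∈ PhiPos n}

/-- The inversion number `inv π = #{v ∈ Φₙ⁺ : π · v ∈ -Φₙ⁺}`. -/
noncomputable def inv (π : SignedPerm n) : ℕ :=
  Set.ncard {v | v ∈ PhiPos n ∧ -(π.act v) ∈ PhiPos n}

end SignedPerm

/-!
Write `L i = #{j > i | σ j < σ i}` for the Lehmer code of `σ` (positions `0, …, n-1`). Among the
roots `e i`, `e i ± e j` (`j > i`), each `j` with `σ j < σ i` contributes exactly one inversion,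
while each `j` with `σ j > σ i` contributes two or none according to `ε i = -1` or `ε i = 1`;
so `inv_i π = L i` if `ε i = 1` and `inv_i π = 2 (n-1-i) + 1 - L i` if `ε i = -1`. Hence
`inv_i π < 2 (n - i)` and `inv_i π` determines both `ε i` and `L i`.

Consequently `d` is the mixed-radix number with digits `inv_{n-2}, …, inv_0` in radices
`2·2, 2·3, …, 2·n`, whose place values are the `D_k`; it is injective on `Dₙ` since the Lehmer code
determines `σ` and the parity condition determines the one sign `ε (n-1)` that `d` does not record.
Surjectivity onto the `2^(n-1) n!` values is a count: `Sₙ × {±1}^(n-1)` injects into `Dₙ`.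
-/

open Finset

lemma Finset.strictMonoOn_card_filter_lt {α : Type*} [Preorder α] [DecidableLT α] (U : Finset α) :
    StrictMonoOn (fun v => #{y ∈ U | y < v}) U :=
  fun v hv w _ hvw => card_lt_card <| (ssubset_iff_of_subset fun y hy => by
    simp only [mem_filter] at hy ⊢; exact ⟨hy.1, hy.2.trans hvw⟩).2
      ⟨v, by simp [mem_coe.1 hv, hvw], by simp⟩

namespace Equiv.Perm

variable {α : Type*} [Fintype α] [LinearOrder α]

def lehmerCode (σ : Perm α) (i : α) : ℕ := #{j | i < j ∧ σ j < σ i}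

lemma lehmerCode_eq_card (σ : Perm α) (i : α) :
    σ.lehmerCode i = #{y ∈ ({y | i ≤ σ.symm y} : Finset α) | y < σ i} := by
  rw [filter_filter]
  refine card_equiv σ fun j => ?_
  simp only [mem_filter, mem_univ, true_and, symm_apply_apply]
  exact ⟨fun h => ⟨h.1.le, h.2⟩, fun h => ⟨h.1.lt_of_ne (by rintro rfl; exact h.2.false), h.2⟩⟩

lemma lehmerCode_injective : Function.Injective (lehmerCode : Perm α → α → ℕ) := by
  intro σ τ h
  refine Equiv.ext fun i => WellFoundedLT.induction (motive := fun i => σ i = τ i) i fun i ih => ?_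
  -- Once `σ` and `τ` agree below `i`, they leave the same values `y` (those with `i ≤ σ⁻¹ y`)
  -- for the positions `≥ i`, and the code at `i` is the rank of `σ i`, resp. `τ i`, among them.
  have hU : ∀ y, i ≤ σ.symm y ↔ i ≤ τ.symm y := by
    refine fun y => not_iff_not.1 ?_
    simp only [not_le]
    constructor
    · intro hy
      rwa [show τ.symm y = σ.symm y from τ.symm_apply_eq.2 (by rw [← ih _ hy, apply_symm_apply])]
    · intro hy
      rwa [show σ.symm y = τ.symm y from σ.symm_apply_eq.2 (by rw [ih _ hy, apply_symm_apply])]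
  have hσ := σ.lehmerCode_eq_card i
  have hτ := τ.lehmerCode_eq_card i
  simp only [hU] at hσ
  rw [congrFun h i, hτ] at hσ
  exact (strictMonoOn_card_filter_lt _).injOn (by simp [← hU]) (by simp) hσ.symm

lemma lehmerCode_le {n : ℕ} (σ : Perm (Fin n)) (i : Fin n) : σ.lehmerCode i ≤ n - 1 - i := by
  rw [lehmerCode, ← Fin.card_Ioi, ← filter_lt_eq_Ioi]
  exact card_le_card fun j hj => by simp only [mem_filter] at hj ⊢; exact ⟨hj.1, hj.2.1⟩

end Equiv.Perm

lemma prod_range_two_mul_add_two (k : ℕ) :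
    ∏ j ∈ range k, 2 * (j + 2) = 2 ^ k * (k + 1).factorial := by
  induction k with
  | zero => simp
  | succ k ih =>
    rw [prod_range_succ, ih, pow_succ, Nat.factorial_succ (k + 1)]
    ring

namespace SignedPerm

variable {n : ℕ}

lemma e_injective : Function.Injective (e : Fin n → Fin n → ℝ) := fun a b h => by
  simpa [e, Pi.single_apply, eq_comm] using congrFun h b

lemma act_add (π : SignedPerm n) (v w : Fin n → ℝ) : π.act (v + w) = π.act v + π.act w := by
  funext j; simp [act, mul_add]

lemma act_sub (π : SignedPerm n) (v w : Fin n → ℝ) : π.act (v - w) = π.act v - π.act w := by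
  funext j; simp [act, mul_sub]

lemma act_e (π : SignedPerm n) (i : Fin n) : π.act (e i) = (π.ε i : ℝ) • e (π.σ i) := by
  funext j
  by_cases h : j = π.σ i
  · subst h; simp [act, e]
  · simp [act, e, h, Equiv.symm_apply_eq]

lemma smul_e_mem_phiPos_iff {s : ℝ} (hs : s = 1 ∨ s = -1) (a : Fin n) :
    s • e a ∈ PhiPos n ↔ s = 1 := by
  refine ⟨?_, fun h => Or.inl ⟨a, by simp [h]⟩⟩
  rintro (⟨k, h⟩ | ⟨i, j, hij, h | h⟩)
  · have ha := congrFun h a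
    simp only [e, Pi.smul_apply, Pi.single_apply, smul_eq_mul] at ha
    grind
  all_goals
    have hi := congrFun h i
    have hj := congrFun h j
    simp only [e, Pi.add_apply, Pi.sub_apply, Pi.smul_apply, Pi.single_apply, smul_eq_mul] at hi hj
    grind

lemma smul_e_add_smul_e_mem_phiPos_iff {s t : ℝ} (hs : s = 1 ∨ s = -1) (ht : t = 1 ∨ t = -1)
    {a b : Fin n} (hab : a ≠ b) :
    s • e a + t • e b ∈ PhiPos n ↔ if a < b then s = 1 else t = 1 := by
  constructor
  · rintro (⟨k, h⟩ | ⟨i, j, hij, h | h⟩)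
    all_goals
      have ha := congrFun h a
      have hb := congrFun h b
      simp only [e, Pi.add_apply, Pi.sub_apply, Pi.smul_apply, Pi.single_apply,
        smul_eq_mul] at ha hb
      grind
  · intro h
    rcases hab.lt_or_gt with hlt | hlt
    · simp only [hlt, if_true] at h
      refine Or.inr ⟨a, b, hlt, ?_⟩
      rcases ht with rfl | rfl <;> simp [h, sub_eq_add_neg]
    · simp only [hlt.not_gt, if_false] at h
      refine Or.inr ⟨b, a, hlt, ?_⟩
      rcases hs with rfl | rfl <;> simp [h, sub_eq_add_neg, add_comm]

lemma coe_ε_eq_one_or_eq_neg_one (π : SignedPerm n) (i : Fin n) :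
    (π.ε i : ℝ) = 1 ∨ (π.ε i : ℝ) = -1 := by
  rcases π.hε i with h | h <;> simp [h]

lemma neg_coe_ε_eq_one_or_eq_neg_one (π : SignedPerm n) (i : Fin n) :
    -(π.ε i : ℝ) = 1 ∨ -(π.ε i : ℝ) = -1 := by
  rcases π.hε i with h | h <;> simp [h]

lemma neg_act_e_mem_phiPos_iff (π : SignedPerm n) (i : Fin n) :
    -π.act (e i) ∈ PhiPos n ↔ π.ε i = -1 := by
  rw [act_e, ← neg_smul, smul_e_mem_phiPos_iff (neg_coe_ε_eq_one_or_eq_neg_one π i),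
    neg_eq_iff_eq_neg]
  norm_cast

lemma neg_act_e_add_e_mem_phiPos_iff (π : SignedPerm n) {i j : Fin n} (hij : i ≠ j) :
    -π.act (e i + e j) ∈ PhiPos n ↔ if π.σ i < π.σ j then π.ε i = -1 else π.ε j = -1 := by
  rw [act_add, act_e, act_e, neg_add, ← neg_smul, ← neg_smul,
    smul_e_add_smul_e_mem_phiPos_iff (neg_coe_ε_eq_one_or_eq_neg_one π i)
      (neg_coe_ε_eq_one_or_eq_neg_one π j)
      (π.σ.injective.ne hij), neg_eq_iff_eq_neg, neg_eq_iff_eq_neg]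
  norm_cast

lemma neg_act_e_sub_e_mem_phiPos_iff (π : SignedPerm n) {i j : Fin n} (hij : i ≠ j) :
    -π.act (e i - e j) ∈ PhiPos n ↔ if π.σ i < π.σ j then π.ε i = -1 else π.ε j = 1 := by
  rw [act_sub, act_e, act_e, neg_sub', sub_eq_add_neg, ← neg_smul, neg_neg,
    smul_e_add_smul_e_mem_phiPos_iff (neg_coe_ε_eq_one_or_eq_neg_one π i)
      (coe_ε_eq_one_or_eq_neg_one π j)
      (π.σ.injective.ne hij), neg_eq_iff_eq_neg]
  norm_cast

lemma ncard_setOf_mem_phiPosI_and (i : Fin n) (Q : (Fin n → ℝ) → Prop) [DecidablePred Q] :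
    {v | v ∈ PhiPosI n i ∧ Q v}.ncard = (if Q (e i) then 1 else 0) +
      ∑ j ∈ Ioi i, ((if Q (e i + e j) then 1 else 0) + if Q (e i - e j) then 1 else 0) := by
  have hset : {v | v ∈ PhiPosI n i ∧ Q v} =
      ↑({v ∈ insert (e i) ((Ioi i).image (e i + e ·) ∪ (Ioi i).image (e i - e ·)) | Q v}) := by
    ext v
    simp only [PhiPosI, Set.mem_ofPred_eq, coe_filter, mem_insert, mem_union, mem_image, mem_Ioi]
    grind
  rw [hset, Set.ncard_coe_finset, card_filter, sum_insert, sum_union, sum_image, sum_image,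
    sum_add_distrib]
  · exact fun j _ k _ h => e_injective (sub_right_injective h)
  · exact fun j _ k _ h => e_injective (add_right_injective _ h)
  · refine disjoint_left.2 fun v hv hv' => ?_
    simp only [mem_image, mem_Ioi] at hv hv'
    obtain ⟨j, hij, rfl⟩ := hv
    obtain ⟨k, hik, h⟩ := hv'
    have := congrFun h j
    simp only [e, Pi.add_apply, Pi.sub_apply, Pi.single_apply] at this
    grind
  · simp only [mem_union, mem_image, mem_Ioi, not_or, not_exists, not_and]
    refine ⟨fun j hij h => ?_, fun j hij h => ?_⟩
    all_goals
      have := congrFun h j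
      simp only [e, Pi.add_apply, Pi.sub_apply, Pi.single_apply] at this
      grind

lemma invi_eq_sum (π : SignedPerm n) (i : Fin n) :
    invi i π = (if π.ε i = -1 then 1 else 0) +
      ∑ j ∈ Ioi i, if π.σ j < π.σ i then 1 else if π.ε i = -1 then 2 else 0 := by
  classical
  rw [invi, ncard_setOf_mem_phiPosI_and, if_congr (neg_act_e_mem_phiPos_iff π i) rfl rfl]
  congr 1
  refine sum_congr rfl fun j hj => ?_
  have hij : i ≠ j := (mem_Ioi.1 hj).ne
  rw [if_congr (neg_act_e_add_e_mem_phiPos_iff π hij) rfl rfl,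
    if_congr (neg_act_e_sub_e_mem_phiPos_iff π hij) rfl rfl]
  have hσ : π.σ i ≠ π.σ j := π.σ.injective.ne hij
  rcases π.hε i with hi | hi <;> rcases π.hε j with hj | hj <;> grind

lemma invi_eq (π : SignedPerm n) (i : Fin n) :
    invi i π = if π.ε i = 1 then π.σ.lehmerCode i
      else 2 * (n - 1 - i) + 1 - π.σ.lehmerCode i := by
  have hcode : π.σ.lehmerCode i = #{j ∈ Ioi i | π.σ j < π.σ i} := by
    rw [Equiv.Perm.lehmerCode, ← filter_lt_eq_Ioi, filter_filter]
  have hcard := card_filter_add_card_filter_not (s := Ioi i) (fun j => π.σ j < π.σ i)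
  rw [Fin.card_Ioi, ← hcode] at hcard
  simp only [not_lt] at hcard
  rw [invi_eq_sum, sum_ite, sum_const, sum_const, smul_eq_mul, smul_eq_mul, ← hcode]
  rcases π.hε i with h | h
  · simp [h]
  · norm_num [h]
    omega

lemma invi_lt (π : SignedPerm n) (i : Fin n) : invi i π < 2 * (n - i) := by
  have := π.σ.lehmerCode_le i
  rw [invi_eq]
  split_ifs <;> omega

lemma ε_eq_and_lehmerCode_eq_of_invi_eq {π ρ : SignedPerm n} {i : Fin n}
    (h : invi i π = invi i ρ) : π.ε i = ρ.ε i ∧ π.σ.lehmerCode i = ρ.σ.lehmerCode i := by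
  have := π.σ.lehmerCode_le i
  have := ρ.σ.lehmerCode_le i
  rw [invi_eq, invi_eq] at h
  rcases π.hε i with hπ | hπ <;> rcases ρ.hε i with hρ | hρ <;> simp [hπ, hρ] at h ⊢ <;> omega

lemma ext {π ρ : SignedPerm n} (hσ : π.σ = ρ.σ) (hε : π.ε = ρ.ε) : π = ρ := by
  cases π; cases ρ; cases hσ; cases hε; rfl

lemma ε_eq_of_even_card {π ρ : SignedPerm n} {k : Fin n} (h : ∀ i ≠ k, π.ε i = ρ.ε i)
    (hπ : Even #{i | π.ε i = -1}) (hρ : Even #{i | ρ.ε i = -1}) : π.ε k = ρ.ε k := by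
  have hsplit : ∀ τ : SignedPerm n, #{i | τ.ε i = -1} =
      (if τ.ε k = -1 then 1 else 0) + ∑ i ∈ univ.erase k, if τ.ε i = -1 then 1 else 0 :=
    fun τ => by rw [card_filter, ← add_sum_erase _ _ (mem_univ k)]
  rw [hsplit, sum_congr rfl fun i hi => by rw [h i (ne_of_mem_erase hi)]] at hπ
  rw [hsplit] at hρ
  rcases π.hε k with hπk | hπk <;> rcases ρ.hε k with hρk | hρk <;>
    simp_all [Nat.even_add, ← Nat.not_even_iff_odd]

end SignedPerm

lemma Set.bijOn_setOf_lt_of_injOn {α ι : Type*} [Fintype ι] {f : α → ℕ} {s : Set α}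
    {N : ℕ} (hmaps : Set.MapsTo f s {k | k < N}) (hf : Set.InjOn f s) {g : ι → α}
    (hg : Function.Injective g) (hgs : ∀ x, g x ∈ s) (hcard : Fintype.card ι = N) :
    Set.BijOn f s {k | k < N} := by
  refine ⟨hmaps, hf, ?_⟩
  let F : ι → Fin N := fun x => ⟨f (g x), hmaps (hgs x)⟩
  have hF : F.Bijective := (Fintype.bijective_iff_injective_and_card F).2
    ⟨fun x y h => hg (hf (hgs x) (hgs y) (Fin.val_eq_of_eq h)), by simp [hcard]⟩
  intro k hk
  obtain ⟨x, hx⟩ := hF.2 ⟨k, hk⟩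
  exact ⟨g x, hgs x, congrArg Fin.val hx⟩

namespace SignedPerm

variable {m : ℕ}

def withEvenSigns (σ : Equiv.Perm (Fin (m + 1))) (b : Fin m → Bool) : SignedPerm (m + 1) where
  σ := σ
  ε := Fin.cons (if Even #{i | b i} then 1 else -1) fun i => if b i then -1 else 1
  hε := Fin.cases (by split_ifs <;> simp) fun i => by cases b i <;> simp

lemma even_card_withEvenSigns (σ : Equiv.Perm (Fin (m + 1))) (b : Fin m → Bool) :
    Even #{i | (withEvenSigns σ b).ε i = -1} := by
  rw [Fin.card_filter_univ_succ']
  by_cases h : Even #{i | b i} <;> simp [withEvenSigns, h, Nat.even_add]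

lemma withEvenSigns_injective : Function.Injective
    fun p : Equiv.Perm (Fin (m + 1)) × (Fin m → Bool) => withEvenSigns p.1 p.2 := by
  rintro ⟨σ, b⟩ ⟨τ, c⟩ h
  refine Prod.ext (congrArg SignedPerm.σ h) (funext fun i => ?_)
  have hε := congrFun (congrArg ε h) i.succ
  simp only [withEvenSigns, Fin.cons_succ] at hε
  cases hb : b i <;> cases hc : c i <;> simp [hb, hc] at hε ⊢

/-- Digit `t` (least significant first) has radix `2 (t + 2)` and place value
`∏ s < t, 2 (s + 2) = 2 ^ t (t + 1)!`. -/
noncomputable def invDigits (π : SignedPerm (m + 2)) (t : Fin (m + 1)) : Fin (2 * (t + 2)) :=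
  ⟨invi t.rev.castSucc π, by have := invi_lt π t.rev.castSucc; simp at this; omega⟩

lemma sum_invi_mul_eq_finPiFinEquiv (π : SignedPerm (m + 2)) :
    ∑ i ∈ univ.filter (fun i : Fin (m + 2) => i.val + 1 ≤ m + 2 - 1),
        invi i π * (2 ^ (m + 2 - 2 - i.val) * Nat.factorial (m + 2 - 1 - i.val)) =
      finPiFinEquiv (invDigits π) := by
  rw [finPiFinEquiv_apply, sum_filter, Fin.sum_univ_castSucc, ← Equiv.sum_comp Fin.revPerm]
  simp only [Fin.val_castSucc, Fin.val_last, Fin.revPerm_apply, invDigits, Fin.val_castLE]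
  rw [if_neg (by omega), add_zero]
  refine sum_congr rfl fun t _ => ?_
  have ht := t.isLt
  rw [if_pos (by omega), Fin.prod_univ_eq_prod_range (fun j => 2 * (j + 2)),
    prod_range_two_mul_add_two, Fin.val_rev]
  congr 3 <;> omega

lemma eq_of_invi_castSucc_eq {π ρ : SignedPerm (m + 1)} (hπ : Even #{i | π.ε i = -1})
    (hρ : Even #{i | ρ.ε i = -1}) (h : ∀ i : Fin m, invi i.castSucc π = invi i.castSucc ρ) :
    π = ρ := by
  have hrec := fun i => ε_eq_and_lehmerCode_eq_of_invi_eq (h i)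
  have hε : ∀ i ≠ Fin.last m, π.ε i = ρ.ε i := fun i hi => by
    obtain ⟨i, rfl⟩ := Fin.exists_castSucc_eq.2 hi
    exact (hrec i).1
  refine ext (Equiv.Perm.lehmerCode_injective (funext fun i => ?_)) (funext fun i => ?_)
  · induction i using Fin.lastCases with
    | last =>
      have hπ0 := π.σ.lehmerCode_le (Fin.last m)
      have hρ0 := ρ.σ.lehmerCode_le (Fin.last m)
      simp only [Fin.val_last, Nat.add_sub_cancel, Nat.sub_self, Nat.le_zero] at hπ0 hρ0
      rw [hπ0, hρ0]
    | cast i => exact (hrec i).2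
  · by_cases hi : i = Fin.last m
    · exact hi ▸ ε_eq_of_even_card hε hπ hρ
    · exact hε i hi

end SignedPerm

open SignedPerm in
/-- Position `i ∈ [n]` is `i.val + 1`, so `D_{n-i} = 2^(n-2-i.val) · (n-1-i.val)!`. -/
theorem d_bijective (n : ℕ) (hn : 2 ≤ n) :
    Set.BijOn
      (fun π : SignedPerm n =>
        ∑ i ∈ Finset.univ.filter (fun i : Fin n => i.val + 1 ≤ n - 1),
          invi i π * (2 ^ (n - 2 - i.val) * Nat.factorial (n - 1 - i.val)))
      {π : SignedPerm n | Even (Finset.univ.filter fun i : Fin n => π.ε i = -1).card}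
      {m : ℕ | m < 2 ^ (n - 1) * Nat.factorial n} := by
  obtain ⟨m, rfl⟩ : ∃ m, n = m + 2 := ⟨n - 2, by omega⟩
  simp only [sum_invi_mul_eq_finPiFinEquiv]
  have hprod : ∏ t : Fin (m + 1), 2 * ((t : ℕ) + 2) = 2 ^ (m + 2 - 1) * Nat.factorial (m + 2) := by
    rw [Fin.prod_univ_eq_prod_range (fun t => 2 * (t + 2)), prod_range_two_mul_add_two]
    rfl
  refine Set.bijOn_setOf_lt_of_injOn (fun π _ => (finPiFinEquiv (invDigits π)).isLt.trans_eq hprod)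
    ?_ withEvenSigns_injective (fun p => even_card_withEvenSigns p.1 p.2)
    (by simp [Fintype.card_perm]; ring)
  intro π hπ ρ hρ h
  have hdig := finPiFinEquiv.injective (Fin.ext h)
  refine eq_of_invi_castSucc_eq hπ hρ fun i => ?_
  simpa [invDigits] using congrArg Fin.val (congrFun hdig i.rev)
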